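/- In any injective colouring of the k-prism (k ≥ 3, indices mod k), if the vertices u_{i−1}, u_{i+1}, v_i (the three neighbours of u_i) determine three distinct colours, and the colouring uses only 3 colours, then the colour of every vertex of the prism is uniquely determined by the colours of u_0, u_2, and v_1 when k is odd. -/

import Mathlib

/-!
With three colours, the three neighbours of every vertex receive all three colours. Along the
outer cycle this makes `c(u_n), c(u_{n+2}), c(u_{n+4})` pairwise distinct: the last inequality
holds because `v_{n+1}` and `v_{n+3}` are forced to the colour missing from their two outer
neighbours, yet they share the neighbour `v_{n+2}`. So the colours of `u_0, u_2, u_4, …` are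
determined by the first two, and for odd `k` these indices run through all residues mod `k`.
Each `v_{n+1}` then receives the colour missing from `u_n, u_{n+2}`.
-/

/-- `c` is an injective colouring of `G`: any two distinct vertices sharing a
common neighbour receive different colours. -/
def IsInjColoring {V α : Type} (G : SimpleGraph V) (c : V → α) : Prop :=
  ∀ u v : V, u ≠ v → (∃ w, G.Adj u w ∧ G.Adj v w) → c u ≠ c v

/-- The injective chromatic number of `G`, as an extended natural number. -/
noncomputable def injChrom {V : Type} (G : SimpleGraph V) : ℕ∞ :=
  ⨅ n ∈ {n : ℕ | ∃ c : V → Fin n, IsInjColoring G c}, (n : ℕ∞)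

/-- The `k`-prism: two `k`-cycles `u_0…u_{k−1}`, `v_0…v_{k−1}` (encoded as
`(i, 0)` and `(i, 1)`) together with the rungs `u_i v_i`. -/
def prism (k : ℕ) : SimpleGraph (Fin k × Fin 2) where
  Adj x y :=
    (x.2 = y.2 ∧ x.1 ≠ y.1 ∧
      (y.1.val = (x.1.val + 1) % k ∨ x.1.val = (y.1.val + 1) % k)) ∨
    (x.1 = y.1 ∧ x.2 ≠ y.2)
  symm := by
    constructor
    rintro ⟨i, a⟩ ⟨j, b⟩ (⟨h1, h2, h3⟩ | ⟨h1, h2⟩)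
    · exact Or.inl ⟨h1.symm, h2.symm, h3.symm⟩
    · exact Or.inr ⟨h1.symm, h2.symm⟩
  loopless := by
    constructor
    rintro ⟨i, a⟩ (⟨-, h, -⟩ | ⟨-, h⟩) <;> exact h rfl

theorem Fin.three_eq_of_ne {a b x y : Fin 3} (hab : a ≠ b) (hxa : x ≠ a) (hxb : x ≠ b)
    (hya : y ≠ a) (hyb : y ≠ b) : x = y := by
  revert a b x y; decide

theorem Fin.three_seq_eq {f g : ℕ → Fin 3} (hf₁ : ∀ n, f n ≠ f (n + 1))
    (hf₂ : ∀ n, f n ≠ f (n + 2)) (hg₁ : ∀ n, g n ≠ g (n + 1)) (hg₂ : ∀ n, g n ≠ g (n + 2))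
    (h₀ : f 0 = g 0) (h₁ : f 1 = g 1) : f = g := by
  have key : ∀ n, f n = g n ∧ f (n + 1) = g (n + 1) := by
    intro n
    induction n with
    | zero => exact ⟨h₀, h₁⟩
    | succ n ih =>
      refine ⟨ih.2, Fin.three_eq_of_ne (hf₁ n) (hf₂ n).symm (hf₁ (n + 1)).symm ?_ ?_⟩
      · rw [ih.1]; exact (hg₂ n).symm
      · rw [ih.2]; exact (hg₁ (n + 1)).symm
  exact funext fun n => (key n).1

theorem IsInjColoring.ne_of_adj {V α : Type} {G : SimpleGraph V} {c : V → α}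
    (hc : IsInjColoring G c) {w x y : V} (hx : G.Adj w x) (hy : G.Adj w y) (hxy : x ≠ y) :
    c x ≠ c y :=
  hc x y hxy ⟨w, hx.symm, hy.symm⟩

theorem Fin.ofNat_ne_ofNat_add {k : ℕ} [NeZero k] (n : ℕ) {d : ℕ} (hd : 0 < d) (hdk : d < k) :
    Fin.ofNat k n ≠ Fin.ofNat k (n + d) := by
  intro h
  have hdvd : k ∣ n + d - n := (Nat.modEq_iff_dvd' (by omega)).mp (congrArg Fin.val h)
  rw [Nat.add_sub_cancel_left] at hdvd
  exact absurd (Nat.le_of_dvd hd hdvd) (by omega)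

namespace prism

variable {k : ℕ} [NeZero k]

/-- The vertex `u_n` (`s = 0`) or `v_n` (`s = 1`), with the index read mod `k`. -/
def vert (k : ℕ) [NeZero k] (n : ℕ) (s : Fin 2) : Fin k × Fin 2 := (Fin.ofNat k n, s)

theorem vert_val (i : Fin k) (s : Fin 2) : vert k i.val s = (i, s) := by
  simp [vert]

theorem vert_add_mul (n m : ℕ) (s : Fin 2) : vert k (n + k * m) s = vert k n s := by
  ext <;> simp [vert]

theorem adj_vert_succ (hk : 2 ≤ k) (n : ℕ) (s : Fin 2) :
    (prism k).Adj (vert k n s) (vert k (n + 1) s) :=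
  Or.inl ⟨rfl, Fin.ofNat_ne_ofNat_add n one_pos hk, Or.inl (by simp [vert, Nat.add_mod])⟩

theorem adj_vert_rung (n : ℕ) : (prism k).Adj (vert k n 0) (vert k n 1) :=
  Or.inr ⟨rfl, by simp [vert]⟩

theorem vert_ne_vert_add_two (hk : 3 ≤ k) (n : ℕ) (s : Fin 2) :
    vert k n s ≠ vert k (n + 2) s := fun h =>
  Fin.ofNat_ne_ofNat_add n two_pos hk (congrArg Prod.fst h)

theorem vert_zero_ne_vert_one (m n : ℕ) : vert k m 0 ≠ vert k n 1 := fun h =>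
  absurd (congrArg Prod.snd h) (by simp [vert])

end prism

namespace IsInjColoring

open prism

variable {k : ℕ} [NeZero k]

theorem prism_ne_add_two {α : Type} {c : Fin k × Fin 2 → α} (hc : IsInjColoring (prism k) c)
    (hk : 3 ≤ k) (n : ℕ) (s : Fin 2) : c (vert k n s) ≠ c (vert k (n + 2) s) :=
  hc.ne_of_adj (adj_vert_succ (by omega) n s).symm (adj_vert_succ (by omega) (n + 1) s)
    (vert_ne_vert_add_two hk n s)

theorem prism_rung_ne_pred {α : Type} {c : Fin k × Fin 2 → α} (hc : IsInjColoring (prism k) c)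
    (hk : 3 ≤ k) (n : ℕ) : c (vert k (n + 1) 1) ≠ c (vert k n 0) :=
  hc.ne_of_adj (adj_vert_rung (n + 1)) (adj_vert_succ (by omega) n 0).symm
    (vert_zero_ne_vert_one _ _).symm

theorem prism_rung_ne_succ {α : Type} {c : Fin k × Fin 2 → α} (hc : IsInjColoring (prism k) c)
    (hk : 3 ≤ k) (n : ℕ) : c (vert k (n + 1) 1) ≠ c (vert k (n + 2) 0) :=
  hc.ne_of_adj (adj_vert_rung (n + 1)) (adj_vert_succ (by omega) (n + 1) 0)
    (vert_zero_ne_vert_one _ _).symm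

theorem prism_inner_eq {c c' : Fin k × Fin 2 → Fin 3} (hc : IsInjColoring (prism k) c)
    (hc' : IsInjColoring (prism k) c') (hk : 3 ≤ k) (n : ℕ)
    (hn : c (vert k n 0) = c' (vert k n 0)) (hn2 : c (vert k (n + 2) 0) = c' (vert k (n + 2) 0)) :
    c (vert k (n + 1) 1) = c' (vert k (n + 1) 1) :=
  Fin.three_eq_of_ne (hc.prism_ne_add_two hk n 0) (hc.prism_rung_ne_pred hk n)
    (hc.prism_rung_ne_succ hk n) (hn ▸ hc'.prism_rung_ne_pred hk n)
    (hn2 ▸ hc'.prism_rung_ne_succ hk n)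

theorem prism_ne_add_four {c : Fin k × Fin 2 → Fin 3} (hc : IsInjColoring (prism k) c)
    (hk : 3 ≤ k) (n : ℕ) : c (vert k n 0) ≠ c (vert k (n + 4) 0) := by
  intro h
  refine hc.prism_ne_add_two hk (n + 1) 1 (Fin.three_eq_of_ne (hc.prism_ne_add_two hk n 0)
    (hc.prism_rung_ne_pred hk n) (hc.prism_rung_ne_succ hk n) ?_ ?_)
  · rw [h]; exact hc.prism_rung_ne_succ hk (n + 2)
  · exact hc.prism_rung_ne_pred hk (n + 2)

theorem prism_outer_eq_of_odd {c c' : Fin k × Fin 2 → Fin 3} (hc : IsInjColoring (prism k) c)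
    (hc' : IsInjColoring (prism k) c') (hk : 3 ≤ k) (hodd : Odd k)
    (h0 : c (vert k 0 0) = c' (vert k 0 0)) (h2 : c (vert k 2 0) = c' (vert k 2 0)) (n : ℕ) :
    c (vert k n 0) = c' (vert k n 0) := by
  have heven : (fun t => c (vert k (2 * t) 0)) = fun t => c' (vert k (2 * t) 0) := by
    refine Fin.three_seq_eq (fun t => ?_) (fun t => ?_) (fun t => ?_) (fun t => ?_) h0 h2
    · rw [mul_add, mul_one]; exact hc.prism_ne_add_two hk _ 0
    · rw [mul_add]; exact hc.prism_ne_add_four hk _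
    · rw [mul_add, mul_one]; exact hc'.prism_ne_add_two hk _ 0
    · rw [mul_add]; exact hc'.prism_ne_add_four hk _
  -- `2` is invertible mod the odd number `k = 2m + 1`, with inverse `m + 1`.
  obtain ⟨m, hm⟩ := hodd
  have hn : vert k (2 * (n * (m + 1))) 0 = vert k n 0 := by
    rw [← vert_add_mul n n 0]; congr 1; rw [hm]; ring
  simpa only [hn] using congrFun heven (n * (m + 1))

end IsInjColoring

open prism in
/-- In any injective 3-colouring of the `k`-prism with `k` odd (`k ≥ 3`),
the neighbours of each vertex receive pairwise distinct colours, and the whole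
colouring is uniquely determined by the colours of `u_0`, `u_2` and `v_1`. -/
theorem prism_inj_three_coloring_determined (k : ℕ) (hk : 3 ≤ k) (hodd : Odd k)
    (c c' : Fin k × Fin 2 → Fin 3)
    (hc : IsInjColoring (prism k) c) (hc' : IsInjColoring (prism k) c')
    (hu0 : c (⟨0, by omega⟩, 0) = c' (⟨0, by omega⟩, 0))
    (hu2 : c (⟨2, by omega⟩, 0) = c' (⟨2, by omega⟩, 0)) :
    c = c' := by
  have : NeZero k := ⟨by omega⟩
  rw [← vert_val ⟨0, by omega⟩ 0] at hu0
  rw [← vert_val ⟨2, by omega⟩ 0] at hu2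
  have hu : ∀ n, c (vert k n 0) = c' (vert k n 0) := hc.prism_outer_eq_of_odd hc' hk hodd hu0 hu2
  have hv : ∀ n, c (vert k n 1) = c' (vert k n 1) := fun n => by
    rw [← vert_add_mul n 1 1, show n + k * 1 = n + k - 1 + 1 by omega]
    exact hc.prism_inner_eq hc' hk _ (hu _) (hu _)
  funext ⟨i, s⟩
  rw [← vert_val i s]
  fin_cases s
  exacts [hu i, hv i]
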